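/- Let X be a metric space, O ⊆ X a set of obstacle points, δ ≥ 0, and T ≥ 0. Let τ̂ : ℝ → X be the predicted trajectory of a braking contingency maneuver that brings the robot to a stop, i.e., τ̂ is constant equal to some state x_stop ∈ X on [T, ∞), and suppose Metric.infDist (τ̂ t) O > δ for all t ∈ [0, T] as well as Metric.infDist x_stop O > δ. Let τ : ℝ → X be the true executed trajectory with dist (τ t) (τ̂ t) ≤ δ for all t ≥ 0 and with τ also constant on [T, ∞). Then τ t ∉ O for all t ≥ 0; that is, executing the contingency maneuver leaves the robot collision-free for all future time, including after it has come to a complete stop. -/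
import Mathlib

/-- If a braking contingency's predicted trajectory `τpred` maintains clearance greater
than `δ` from the obstacles `O` on `[0, T]`, and `τpred` is constant equal to `x_stop`
on `[T, ∞)` with `x_stop` also having clearance greater than `δ`, and the true
trajectory `τ` deviates from `τpred` by at most `δ` for all `t ≥ 0` and is also constant
on `[T, ∞)`, then the true trajectory is collision-free for all `t ≥ 0`. -/
theorem contingency_collision_free_forever
    {X : Type*} [MetricSpace X] (O : Set X) (δ T : ℝ)
    (hδ : 0 ≤ δ) (hT : 0 ≤ T)
    (τpred τ : ℝ → X) (x_stop : X)
    (hstop : ∀ t ≥ T, τpred t = x_stop)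
    (hclear : ∀ t ∈ Set.Icc (0 : ℝ) T, Metric.infDist (τpred t) O > δ)
    (hclear_stop : Metric.infDist x_stop O > δ)
    (hdev : ∀ t ≥ (0 : ℝ), dist (τ t) (τpred t) ≤ δ)
    (hτconst : ∀ s ≥ T, ∀ t ≥ T, τ s = τ t) :
    ∀ t ≥ (0 : ℝ), τ t ∉ O := by
  intro t ht hmem
  have key : ∀ s ≥ (0 : ℝ), τ s ∈ O → False := by
    intro s hs hsO
    have h1 : Metric.infDist (τpred s) O ≤ dist (τpred s) (τ s) :=
      Metric.infDist_le_dist_of_mem hsO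
    have h2 : dist (τpred s) (τ s) ≤ δ := by
      rw [dist_comm]; exact hdev s hs
    rcases le_or_gt s T with hle | hlt
    · exact absurd (h1.trans h2) (not_le.mpr (hclear s ⟨hs, hle⟩))
    · rw [hstop s hlt.le] at h1 h2
      exact absurd (h1.trans h2) (not_le.mpr hclear_stop)
  exact key t ht hmem
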